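/- arXiv:2011.13435 — 2 statements merged into one kernel-verified Lean document; each statement's English description precedes it below -/
import Mathlib

section
/- Let d ≥ 2 and κ > 0. Set φ(r) = r√(1+κ²r²) for r > 0 and h(r) = (φ'(r)/r)^{d-1} φ''(r). Then h(r) > 0 for all r > 0, and there exists a constant C > 0, depending only on d (in particular independent of κ and r), such that for all r > 0, 0 ≤ h(r)^{-1/2} ≤ C κ^{-d/2} (κr/√(1+κ²r²))^{(d-2)/2}. -/
noncomputable section

/-- The phase `φ(r) = r √(1 + κ² r²)`. -/
def phiK (κ : ℝ) : ℝ → ℝ := fun r => r * Real.sqrt (1 + κ ^ 2 * r ^ 2)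

/-- `h(r) = (φ'(r)/r)^{d-1} φ''(r)`, the determinant of the Hessian of the radial
function `ξ ↦ φ(|ξ|)` on `ℝ^d`, for `φ = phiK κ`. -/
def hK (d : ℕ) (κ : ℝ) (r : ℝ) : ℝ :=
  (deriv (phiK κ) r / r) ^ (d - 1) * deriv (deriv (phiK κ)) r

/-! With `s = √(1 + κ²r²)` and `q = κr/s ∈ (0, 1)` one computes `φ'(r) = (1 + 2κ²r²)/s`
and `φ''(r) = κ²r(3 + 2κ²r²)/s³`. Since `s² = 1 + κ²r²` is at most both `1 + 2κ²r²` and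
`3 + 2κ²r²`, we get `φ'(r)/r ≥ s/r = κ/q` and `φ''(r) ≥ κq`, hence
`h(r) ≥ (κ/q)^{d-1} κq = κ^d q^{2-d}`, i.e. `h(r)^{-1/2} ≤ κ^{-d/2} q^{(d-2)/2}` with `C = 1`. -/

namespace PhiK

variable (κ : ℝ)

lemma one_add_sq_pos (r : ℝ) : 0 < 1 + κ ^ 2 * r ^ 2 := by positivity

lemma hasDerivAt_sqrt_one_add_sq (r : ℝ) :
    HasDerivAt (fun r => Real.sqrt (1 + κ ^ 2 * r ^ 2))
      (κ ^ 2 * r / Real.sqrt (1 + κ ^ 2 * r ^ 2)) r := by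
  have hinner : HasDerivAt (fun r : ℝ => 1 + κ ^ 2 * r ^ 2) (κ ^ 2 * (2 * r)) r := by
    simpa using ((hasDerivAt_pow 2 r).const_mul (κ ^ 2)).const_add 1
  refine ((Real.hasDerivAt_sqrt (one_add_sq_pos κ r).ne').comp r hinner).congr_deriv ?_
  have hs := Real.sqrt_pos.2 (one_add_sq_pos κ r)
  field_simp

lemma hasDerivAt_phiK (r : ℝ) :
    HasDerivAt (phiK κ) ((1 + 2 * κ ^ 2 * r ^ 2) / Real.sqrt (1 + κ ^ 2 * r ^ 2)) r := by
  refine ((hasDerivAt_id' r).mul (hasDerivAt_sqrt_one_add_sq κ r)).congr_deriv ?_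
  have hs := Real.sqrt_pos.2 (one_add_sq_pos κ r)
  have hs2 := Real.sq_sqrt (one_add_sq_pos κ r).le
  field_simp
  linear_combination hs2

lemma deriv_phiK :
    deriv (phiK κ) = fun r => (1 + 2 * κ ^ 2 * r ^ 2) / Real.sqrt (1 + κ ^ 2 * r ^ 2) :=
  funext fun r => (hasDerivAt_phiK κ r).deriv

lemma deriv_deriv_phiK (r : ℝ) :
    deriv (deriv (phiK κ)) r =
      κ ^ 2 * r * (3 + 2 * κ ^ 2 * r ^ 2) / Real.sqrt (1 + κ ^ 2 * r ^ 2) ^ 3 := by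
  have hnum : HasDerivAt (fun r : ℝ => 1 + 2 * κ ^ 2 * r ^ 2) (2 * κ ^ 2 * (2 * r)) r := by
    simpa using ((hasDerivAt_pow 2 r).const_mul (2 * κ ^ 2)).const_add 1
  have hs := Real.sqrt_pos.2 (one_add_sq_pos κ r)
  have hs2 := Real.sq_sqrt (one_add_sq_pos κ r).le
  rw [deriv_phiK]
  refine ((hnum.div (hasDerivAt_sqrt_one_add_sq κ r) hs.ne').congr_deriv ?_).deriv
  field_simp
  linear_combination (4 * κ ^ 2 * r) * hs2

variable {κ} {r : ℝ}

lemma div_le_deriv_phiK_div (hκ : 0 < κ) (hr : 0 < r) :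
    κ / (κ * r / Real.sqrt (1 + κ ^ 2 * r ^ 2)) ≤ deriv (phiK κ) r / r := by
  have hs := Real.sqrt_pos.2 (one_add_sq_pos κ r)
  have hs2 := Real.sq_sqrt (one_add_sq_pos κ r).le
  have hsq : Real.sqrt (1 + κ ^ 2 * r ^ 2) ≤
      (1 + 2 * κ ^ 2 * r ^ 2) / Real.sqrt (1 + κ ^ 2 * r ^ 2) := by
    rw [le_div_iff₀ hs]
    nlinarith [sq_nonneg (κ * r)]
  calc κ / (κ * r / Real.sqrt (1 + κ ^ 2 * r ^ 2)) = Real.sqrt (1 + κ ^ 2 * r ^ 2) / r := by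
        field_simp
    _ ≤ deriv (phiK κ) r / r := by
        rw [deriv_phiK]
        exact div_le_div_of_nonneg_right hsq hr.le

lemma mul_le_deriv_deriv_phiK (hr : 0 ≤ r) :
    κ * (κ * r / Real.sqrt (1 + κ ^ 2 * r ^ 2)) ≤ deriv (deriv (phiK κ)) r := by
  have hs := Real.sqrt_pos.2 (one_add_sq_pos κ r)
  have hs2 := Real.sq_sqrt (one_add_sq_pos κ r).le
  calc κ * (κ * r / Real.sqrt (1 + κ ^ 2 * r ^ 2))
      = κ ^ 2 * r * Real.sqrt (1 + κ ^ 2 * r ^ 2) ^ 2 / Real.sqrt (1 + κ ^ 2 * r ^ 2) ^ 3 := by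
        field_simp
    _ ≤ κ ^ 2 * r * (3 + 2 * κ ^ 2 * r ^ 2) / Real.sqrt (1 + κ ^ 2 * r ^ 2) ^ 3 := by
        gcongr
        nlinarith [sq_nonneg (κ * r)]
    _ = deriv (deriv (phiK κ)) r := (deriv_deriv_phiK κ r).symm

end PhiK

lemma le_hK (d : ℕ) {κ r : ℝ} (hκ : 0 < κ) (hr : 0 < r) :
    (κ / (κ * r / Real.sqrt (1 + κ ^ 2 * r ^ 2))) ^ (d - 1) *
        (κ * (κ * r / Real.sqrt (1 + κ ^ 2 * r ^ 2))) ≤ hK d κ r := by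
  have hq : 0 < κ * r / Real.sqrt (1 + κ ^ 2 * r ^ 2) := by positivity
  have h₁ := PhiK.div_le_deriv_phiK_div hκ hr
  exact mul_le_mul (pow_le_pow_left₀ (by positivity) h₁ _)
    (PhiK.mul_le_deriv_deriv_phiK hr.le) (by positivity)
    (pow_nonneg ((div_pos hκ hq).le.trans h₁) _)

lemma rpow_neg_half_div_pow_mul {a q : ℝ} (ha : 0 < a) (hq : 0 < q) {d : ℕ} (hd : 1 ≤ d) :
    ((a / q) ^ (d - 1) * (a * q)) ^ (-(1 : ℝ) / 2) =
      a ^ (-(d : ℝ) / 2) * q ^ (((d : ℝ) - 2) / 2) := by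
  rw [← Real.exp_log (by positivity : 0 < ((a / q) ^ (d - 1) * (a * q)) ^ (-(1 : ℝ) / 2)),
    ← Real.exp_log (by positivity : 0 < a ^ (-(d : ℝ) / 2) * q ^ (((d : ℝ) - 2) / 2))]
  congr 1
  rw [Real.log_rpow (by positivity), Real.log_mul (by positivity) (by positivity), Real.log_pow,
    Real.log_div ha.ne' hq.ne', Real.log_mul ha.ne' hq.ne',
    Real.log_mul (by positivity) (by positivity), Real.log_rpow ha, Real.log_rpow hq,
    Nat.cast_sub hd]
  push_cast
  ring

/-- Let `d ≥ 2`. For `φ(r) = r√(1+κ²r²)` and `h(r) = (φ'(r)/r)^{d-1} φ''(r)`, one has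
`h(r) > 0` for all `r > 0`, and there is a constant `C > 0` depending only on `d`
(independent of `κ` and `r`) such that
`0 ≤ h(r)^{-1/2} ≤ C κ^{-d/2} (κr/√(1+κ²r²))^{(d-2)/2}` for all `κ > 0`, `r > 0`. -/
theorem hK_lower_bound (d : ℕ) (hd : 2 ≤ d) :
    ∃ C > 0, ∀ κ > 0, ∀ r > 0,
      0 < hK d κ r ∧
      0 ≤ (hK d κ r) ^ (-(1 : ℝ) / 2) ∧
      (hK d κ r) ^ (-(1 : ℝ) / 2) ≤
        C * κ ^ (-(d : ℝ) / 2) *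
          (κ * r / Real.sqrt (1 + κ ^ 2 * r ^ 2)) ^ (((d : ℝ) - 2) / 2) := by
  refine ⟨1, one_pos, fun κ hκ r hr => ?_⟩
  set q := κ * r / Real.sqrt (1 + κ ^ 2 * r ^ 2)
  have hq : 0 < q := by positivity
  have hlow : (κ / q) ^ (d - 1) * (κ * q) ≤ hK d κ r := le_hK d hκ hr
  have hlow_pos : 0 < (κ / q) ^ (d - 1) * (κ * q) := by positivity
  have hpos := hlow_pos.trans_le hlow
  refine ⟨hpos, Real.rpow_nonneg hpos.le _, ?_⟩
  calc hK d κ r ^ (-(1 : ℝ) / 2) ≤ ((κ / q) ^ (d - 1) * (κ * q)) ^ (-(1 : ℝ) / 2) :=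
        Real.rpow_le_rpow_of_nonpos hlow_pos hlow (by norm_num)
    _ = 1 * κ ^ (-(d : ℝ) / 2) * q ^ (((d : ℝ) - 2) / 2) := by
        rw [one_mul, rpow_neg_half_div_pow_mul hκ hq (by omega)]
end
end

section
/- Let d > 2 and κ > 0. Set φ(r) = r√(1+κ²r²) for r > 0 and h(r) = (φ'(r)/r)^{d-1} φ''(r). Then for every δ ∈ [0, (d-2)/2] there exists a constant C > 0, depending only on d and κ, such that for all r > 0, h(r)^{-1/2} ≤ C r^δ. -/
/-!
With `s = √(1 + κ²r²)` one computes `φ' = (1 + 2κ²r²)/s` and `φ'' = κ²r(3 + 2κ²r²)/s³`.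
Since `1 + 2κ²r² ≥ s²` and `3 + 2κ²r² ≥ 2s²`, this gives `φ'/r ≥ s/r` and `φ'' ≥ 2κ²r/s`, so the
two factors of `h` telescope to `h(r) ≥ 2κ² (s/r)^(d-2)`. As `s/r ≥ κ` and `s/r ≥ 1/r`, splitting
the exponent as `d - 2 = (d - 2 - 2δ) + 2δ` yields `h(r) ≥ 2κ^(d-2δ) r^(-2δ)`; raise to the
power `-1/2`.
-/

noncomputable section

open Real

lemma hasDerivAt_sqrt_one_add_sq_mul_sq (κ r : ℝ) :
    HasDerivAt (fun x => √(1 + κ ^ 2 * x ^ 2)) (κ ^ 2 * r / √(1 + κ ^ 2 * r ^ 2)) r := by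
  have hpos : 0 < 1 + κ ^ 2 * r ^ 2 := by positivity
  have hinner : HasDerivAt (fun x : ℝ => 1 + κ ^ 2 * x ^ 2) (κ ^ 2 * (2 * r)) r := by
    simpa using ((hasDerivAt_pow 2 r).const_mul (κ ^ 2)).const_add 1
  convert hinner.sqrt hpos.ne' using 1
  have : √(1 + κ ^ 2 * r ^ 2) ≠ 0 := (sqrt_pos.mpr hpos).ne'
  field_simp

lemma hasDerivAt_phiK (κ r : ℝ) :
    HasDerivAt (phiK κ) ((1 + 2 * κ ^ 2 * r ^ 2) / √(1 + κ ^ 2 * r ^ 2)) r := by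
  have hpos : 0 < 1 + κ ^ 2 * r ^ 2 := by positivity
  have hsq : √(1 + κ ^ 2 * r ^ 2) ^ 2 = 1 + κ ^ 2 * r ^ 2 := sq_sqrt hpos.le
  have : √(1 + κ ^ 2 * r ^ 2) ≠ 0 := (sqrt_pos.mpr hpos).ne'
  refine ((hasDerivAt_id r).mul (hasDerivAt_sqrt_one_add_sq_mul_sq κ r)).congr_deriv ?_
  simp only [id_eq]
  field_simp
  linear_combination hsq

lemma deriv_phiK (κ : ℝ) :
    deriv (phiK κ) = fun r => (1 + 2 * κ ^ 2 * r ^ 2) / √(1 + κ ^ 2 * r ^ 2) :=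
  funext fun r => (hasDerivAt_phiK κ r).deriv

lemma deriv_deriv_phiK (κ r : ℝ) :
    deriv (deriv (phiK κ)) r
      = κ ^ 2 * r * (3 + 2 * κ ^ 2 * r ^ 2) / √(1 + κ ^ 2 * r ^ 2) ^ 3 := by
  have hpos : 0 < 1 + κ ^ 2 * r ^ 2 := by positivity
  have hsq : √(1 + κ ^ 2 * r ^ 2) ^ 2 = 1 + κ ^ 2 * r ^ 2 := sq_sqrt hpos.le
  have hs : √(1 + κ ^ 2 * r ^ 2) ≠ 0 := (sqrt_pos.mpr hpos).ne'
  have hnum : HasDerivAt (fun x : ℝ => 1 + 2 * κ ^ 2 * x ^ 2) (2 * κ ^ 2 * (2 * r)) r := by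
    simpa using ((hasDerivAt_pow 2 r).const_mul (2 * κ ^ 2)).const_add 1
  rw [deriv_phiK]
  refine (hnum.div (hasDerivAt_sqrt_one_add_sq_mul_sq κ r) hs).deriv.trans ?_
  field_simp
  linear_combination (4 * κ ^ 2 * r) * hsq

lemma two_mul_sq_mul_pow_le_hK {d : ℕ} (hd : 2 ≤ d) (κ : ℝ) {r : ℝ} (hr : 0 < r) :
    2 * κ ^ 2 * (√(1 + κ ^ 2 * r ^ 2) / r) ^ (d - 2) ≤ hK d κ r := by
  rw [hK, deriv_deriv_phiK, deriv_phiK]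
  set s := √(1 + κ ^ 2 * r ^ 2)
  have hs : 0 < s := sqrt_pos.mpr (by positivity)
  have hsq : s ^ 2 = 1 + κ ^ 2 * r ^ 2 := sq_sqrt (by positivity)
  have hfirst : s / r ≤ (1 + 2 * κ ^ 2 * r ^ 2) / s / r := by
    gcongr
    rw [le_div_iff₀ hs]
    nlinarith
  have hsecond : 2 * κ ^ 2 * r / s ≤ κ ^ 2 * r * (3 + 2 * κ ^ 2 * r ^ 2) / s ^ 3 := by
    rw [div_le_div_iff₀ hs (by positivity)]
    have : 0 ≤ κ ^ 2 * r * s := by positivity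
    nlinarith
  obtain ⟨n, rfl⟩ : ∃ n, d = n + 2 := ⟨d - 2, by omega⟩
  calc 2 * κ ^ 2 * (s / r) ^ (n + 2 - 2)
      = (s / r) ^ (n + 2 - 1) * (2 * κ ^ 2 * r / s) := by
        have hcancel : s / r * (2 * κ ^ 2 * r / s) = 2 * κ ^ 2 := by field_simp
        rw [Nat.add_sub_cancel, show n + 2 - 1 = n + 1 by omega, pow_succ (s / r),
          mul_assoc ((s / r) ^ n), hcancel, mul_comm]
    _ ≤ _ := by gcongr

lemma mul_rpow_neg_le_rpow {a q r t n : ℝ} (ha : 0 < a) (hr : 0 < r) (haq : a ≤ q)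
    (hrq : r⁻¹ ≤ q) (ht : 0 ≤ t) (htn : t ≤ n) : a ^ (n - t) * r ^ (-t) ≤ q ^ n := by
  have hq : 0 < q := ha.trans_le haq
  calc a ^ (n - t) * r ^ (-t) = a ^ (n - t) * r⁻¹ ^ t := by rw [inv_rpow hr.le, rpow_neg hr.le]
    _ ≤ q ^ (n - t) * q ^ t := by gcongr
    _ = q ^ n := by rw [← rpow_add hq]; ring_nf

/-- **Regularizing effect at low frequencies (`d > 2`).** Let `d > 2`, `κ > 0`,
`φ(r) = r√(1+κ²r²)` and `h(r) = (φ'(r)/r)^{d-1} φ''(r)`. For every `δ ∈ [0, (d-2)/2]` there is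
a constant `C > 0`, depending only on `d` and `κ`, such that `h(r)^{-1/2} ≤ C r^δ` for all
`r > 0`. -/
theorem hK_regularizing (d : ℕ) (hd : 2 < d) (κ : ℝ) (hκ : 0 < κ)
    (δ : ℝ) (hδ : δ ∈ Set.Icc (0 : ℝ) (((d : ℝ) - 2) / 2)) :
    ∃ C > 0, ∀ r > 0, (hK d κ r) ^ (-(1 : ℝ) / 2) ≤ C * r ^ δ := by
  set c := 2 * κ ^ 2 * κ ^ ((d - 2 : ℝ) - 2 * δ)
  have hc : 0 < c := by positivity
  refine ⟨c ^ (-(1 : ℝ) / 2), by positivity, fun r hr => ?_⟩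
  obtain ⟨hκr, hone⟩ : κ * r ≤ √(1 + κ ^ 2 * r ^ 2) ∧ 1 ≤ √(1 + κ ^ 2 * r ^ 2) := by
    constructor <;> rw [le_sqrt' (by positivity)] <;> nlinarith [sq_nonneg (κ * r)]
  have hpow :
      κ ^ ((d - 2 : ℝ) - 2 * δ) * r ^ (-(2 * δ)) ≤ (√(1 + κ ^ 2 * r ^ 2) / r) ^ (d - 2) := by
    rw [← rpow_natCast _ (d - 2), Nat.cast_sub hd.le, Nat.cast_ofNat]
    refine mul_rpow_neg_le_rpow hκ hr ?_ ?_ (by linarith [hδ.1]) (by linarith [hδ.2])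
    · rwa [le_div_iff₀ hr]
    · rw [inv_eq_one_div]
      gcongr
  have hlow : c * r ^ (-(2 * δ)) ≤ hK d κ r := by
    refine le_trans ?_ (two_mul_sq_mul_pow_le_hK hd.le κ hr)
    rw [mul_assoc]
    gcongr
  calc hK d κ r ^ (-(1 : ℝ) / 2) ≤ (c * r ^ (-(2 * δ))) ^ (-(1 : ℝ) / 2) :=
        rpow_le_rpow_of_nonpos (by positivity) hlow (by norm_num)
    _ = c ^ (-(1 : ℝ) / 2) * r ^ δ := by
        rw [mul_rpow hc.le (by positivity), ← rpow_mul hr.le]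
        ring_nf
end
end
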